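/- arXiv:0705.0853 — 2 statements merged into one kernel-verified Lean document; each statement's English description precedes it below -/
import Mathlib

section
/- With τ and u as above, define t(n) = n − 2u(n) for n ≥ 2. Then t(n)/u(n) → 0 as n → ∞, and if moreover τ(n) → ∞, then t(n) → ∞ as n → ∞. -/
/-!
Let `k = u n` be the largest admissible `m`. Admissibility of `k` gives `τ k ≤ n - 2k`, and
non-admissibility of `k + 1` gives `n - 2k ≤ 1 + τ (k + 1)`; so `t n` is squeezed between `τ (u n)`
and `1 + τ (u n + 1)`. Since `τ m ≤ m`, every `m ≤ n / 3` is admissible, hence `u n → ∞`, and both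
claims follow from `τ m / m → 0` resp. `τ m → ∞`.
-/

open Filter Topology

def admissibleSet (τ : ℕ → ℕ) (n : ℕ) : Set ℕ := {m | 1 ≤ m ∧ 2 * m + τ m ≤ n}

section admissibleSet

variable {τ : ℕ → ℕ} {n k : ℕ}

lemma mem_admissibleSet_of_three_mul_le (hτle : ∀ m, τ m ≤ m) {m : ℕ} (hm : 1 ≤ m)
    (hmn : 3 * m ≤ n) : m ∈ admissibleSet τ n :=
  ⟨hm, by have := hτle m; omega⟩

lemma IsGreatest.tau_le_sub (hk : IsGreatest (admissibleSet τ n) k) : τ k ≤ n - 2 * k := by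
  have := hk.1.2
  omega

lemma IsGreatest.sub_le_one_add_tau_succ (hk : IsGreatest (admissibleSet τ n) k) :
    n - 2 * k ≤ 1 + τ (k + 1) := by
  by_contra! h
  have := hk.2 (show k + 1 ∈ admissibleSet τ n from ⟨by omega, by omega⟩)
  omega

lemma IsGreatest.sub_div_le (hk : IsGreatest (admissibleSet τ n) k) :
    ((n - 2 * k : ℕ) : ℝ) / k ≤ 2 * ((1 + τ (k + 1)) / ((k + 1 : ℕ) : ℝ)) := by
  have hk1 : (1 : ℝ) ≤ k := by exact_mod_cast hk.1.1
  have hsub : ((n - 2 * k : ℕ) : ℝ) ≤ 1 + τ (k + 1) := by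
    exact_mod_cast hk.sub_le_one_add_tau_succ
  rw [mul_div_assoc', le_div_iff₀ (by positivity), div_mul_eq_mul_div,
    div_le_iff₀ (by positivity)]
  push_cast
  nlinarith

end admissibleSet

lemma tendsto_atTop_of_isGreatest_admissibleSet {τ u : ℕ → ℕ} (hτle : ∀ m, τ m ≤ m)
    (hu : ∀ᶠ n in atTop, IsGreatest (admissibleSet τ n) (u n)) : Tendsto u atTop atTop := by
  refine tendsto_atTop.2 fun b => ?_
  filter_upwards [hu, eventually_ge_atTop (3 * (b + 1))] with n hn hbn
  exact (hn.2 (mem_admissibleSet_of_three_mul_le hτle b.succ_pos hbn)).trans' b.le_succ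

lemma tendsto_one_add_div_of_tendsto_div {f : ℕ → ℝ}
    (hf : Tendsto (fun n => f n / n) atTop (𝓝 0)) :
    Tendsto (fun n => (1 + f n) / n) atTop (𝓝 0) := by
  simpa only [add_div, zero_add] using (tendsto_const_div_atTop_nhds_zero_nat 1).add hf

theorem stmt_1_general (τ : ℕ → ℕ)
    (hτle : ∀ n, τ n ≤ n)
    (hτlim : Tendsto (fun n => (τ n : ℝ) / (n : ℝ)) atTop (nhds 0))
    (u : ℕ → ℕ)
    (hu : ∀ n, 2 ≤ n →
      1 ≤ u n ∧ 2 * u n + τ (u n) ≤ n ∧ ∀ m, 1 ≤ m → 2 * m + τ m ≤ n → m ≤ u n)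
    (t : ℕ → ℕ) (ht : ∀ n, 2 ≤ n → t n = n - 2 * u n) :
    Tendsto (fun n => (t n : ℝ) / (u n : ℝ)) atTop (nhds 0) ∧
    (Tendsto τ atTop atTop → Tendsto t atTop atTop) := by
  have hmax : ∀ᶠ n in atTop, IsGreatest (admissibleSet τ n) (u n) ∧ t n = n - 2 * u n := by
    filter_upwards [eventually_ge_atTop 2] with n hn
    obtain ⟨h1, h2, h3⟩ := hu n hn
    exact ⟨⟨⟨h1, h2⟩, fun m hm => h3 m hm.1 hm.2⟩, ht n hn⟩
  have huTop := tendsto_atTop_of_isGreatest_admissibleSet hτle (hmax.mono fun _ h => h.1)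
  constructor
  · have hbound := ((tendsto_one_add_div_of_tendsto_div hτlim).comp
      ((tendsto_add_atTop_nat 1).comp huTop)).const_mul 2
    rw [mul_zero] at hbound
    refine squeeze_zero' (Eventually.of_forall fun n => by positivity) ?_ hbound
    filter_upwards [hmax] with n ⟨hn, htn⟩
    rw [htn]
    exact hn.sub_div_le
  · intro hτtop
    refine tendsto_atTop_mono' atTop ?_ (hτtop.comp huTop)
    filter_upwards [hmax] with n ⟨hn, htn⟩
    exact htn ▸ hn.tau_le_sub

theorem stmt_1 (τ : ℕ → ℕ) (hτmono : Monotone τ) (hτ1 : τ 1 = 0)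
    (hτle : ∀ n, τ n ≤ n)
    (hτlim : Tendsto (fun n => (τ n : ℝ) / (n : ℝ)) atTop (nhds 0))
    (u : ℕ → ℕ) (hu1 : u 1 = 1)
    (hu : ∀ n, 2 ≤ n →
      1 ≤ u n ∧ 2 * u n + τ (u n) ≤ n ∧ ∀ m, 1 ≤ m → 2 * m + τ m ≤ n → m ≤ u n)
    (t : ℕ → ℕ) (ht : ∀ n, 2 ≤ n → t n = n - 2 * u n) :
    Tendsto (fun n => (t n : ℝ) / (u n : ℝ)) atTop (nhds 0) ∧
    (Tendsto τ atTop atTop → Tendsto t atTop atTop) :=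
  stmt_1_general τ hτle hτlim u hu t ht
end

section
/- Let σ : ℕ → (0, ∞) and let u : ℕ → ℕ satisfy: there exists N₀ such that for all n ≥ N₀, σ(n)² / σ(u(n))² ≥ 5/3 and n / u(n) ≤ 7/3 and u(n) < n. Then σ(n) → ∞ as n → ∞. -/
open Filter

theorem stmt_12 (σ : ℕ → ℝ) (hσ : ∀ n, 0 < σ n) (u : ℕ → ℕ)
    (h : ∃ N₀ : ℕ, ∀ n ≥ N₀,
      5 / 3 ≤ (σ n) ^ 2 / (σ (u n)) ^ 2 ∧ (n : ℝ) ≤ 7 / 3 * (u n : ℝ) ∧ u n < n) :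
    Tendsto σ atTop atTop := by
  obtain ⟨N₀, hN₀⟩ := h
  set M : ℝ := ((Finset.range (N₀+1)).image (fun m => σ m ^ 2)).min'
    (by simp) with hM
  have hMle : ∀ m ≤ N₀, M ≤ σ m ^ 2 := fun m hm =>
    Finset.min'_le _ _ (Finset.mem_image_of_mem _ (Finset.mem_range.mpr (Nat.lt_succ_of_le hm)))
  have hMpos : 0 < M := by
    obtain ⟨m, hm, hm'⟩ := Finset.mem_image.mp (Finset.min'_mem ((Finset.range (N₀+1)).image (fun m => σ m ^ 2)) (by simp))
    rw [hM, ← hm']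
    exact pow_pos (hσ m) 2
  have hglob : ∀ n, M ≤ σ n ^ 2 := by
    intro n
    induction n using Nat.strong_induction_on with
    | _ n ih =>
      rcases le_or_gt n N₀ with hn | hn
      · exact hMle n hn
      · obtain ⟨h1, h2, h3⟩ := hN₀ n hn.le
        have hpos : (0:ℝ) < σ (u n) ^ 2 := pow_pos (hσ _) 2
        have h1' := (le_div_iff₀ hpos).mp h1
        have := ih (u n) h3
        nlinarith
  have key : ∀ k : ℕ, ∀ n : ℕ, (7/3:ℝ)^k * (N₀+1) ≤ n → (5/3:ℝ)^k * M ≤ σ n ^ 2 := by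
    intro k
    induction k with
    | zero => intro n _; simpa using hglob n
    | succ k ih =>
      intro n hn
      have h73 : (1:ℝ) ≤ (7/3:ℝ)^(k+1) := one_le_pow₀ (by norm_num)
      have hN0 : (0:ℝ) ≤ (N₀:ℝ) := Nat.cast_nonneg N₀
      have hnN : (N₀:ℝ) ≤ n := by nlinarith
      have hn' : N₀ ≤ n := by exact_mod_cast hnN
      obtain ⟨h1, h2, h3⟩ := hN₀ n hn'
      have hpos : (0:ℝ) < σ (u n) ^ 2 := pow_pos (hσ _) 2
      have h1' := (le_div_iff₀ hpos).mp h1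
      have hu : (7/3:ℝ)^k * (N₀+1) ≤ u n := by
        rw [pow_succ] at hn
        nlinarith
      have hih := ih (u n) hu
      rw [pow_succ]
      nlinarith
  rw [tendsto_atTop_atTop]
  intro b
  obtain ⟨k, hk⟩ := pow_unbounded_of_one_lt ((max b 1)^2 / M) (by norm_num : (1:ℝ) < 5/3)
  refine ⟨⌈(7/3:ℝ)^k * (N₀+1)⌉₊, fun n hn => ?_⟩
  have hn' : (7/3:ℝ)^k * (N₀+1) ≤ n :=
    (Nat.le_ceil _).trans (by exact_mod_cast hn)
  have h1 := key k n hn'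
  have hb2 : (max b 1)^2 ≤ σ n ^ 2 := by
    rw [div_lt_iff₀ hMpos] at hk
    linarith
  have hmax : max b 1 ≤ σ n :=
    le_of_pow_le_pow_left₀ two_ne_zero (hσ n).le hb2
  exact le_trans (le_max_left _ _) hmax
end
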